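/- Chaplygin's invariant measure on ℝ⁶: let B be a symmetric invertible 3×3 real matrix and κ ∈ ℝ. On the open set U = {(L, γ) ∈ ℝ³ × ℝ³ : 1 − κ⟨γ, B⁻¹γ⟩ > 0}, define Ω(L, γ) = B⁻¹L + (κ⟨γ, B⁻¹L⟩ / (1 − κ⟨γ, B⁻¹γ⟩)) B⁻¹γ, the vector field Y(L, γ) = (L × Ω(L,γ), γ × Ω(L,γ)), and the density f(L, γ) = (1 − κ⟨γ, B⁻¹γ⟩)^{−1/2}. Then the divergence of the vector field f·Y vanishes identically on U; equivalently, f(γ) dL₁dL₂dL₃ dγ₁dγ₂dγ₃ is an invariant measure of Chaplygin's marble equations on ℝ⁶. -/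

import Mathlib

open Matrix

/-- Euclidean inner product on ℝ³. -/
def dot3 (u v : Fin 3 → ℝ) : ℝ := u 0 * v 0 + u 1 * v 1 + u 2 * v 2

/-- Cross product on ℝ³. -/
def cross3 (u v : Fin 3 → ℝ) : Fin 3 → ℝ :=
  ![u 1 * v 2 - u 2 * v 1, u 2 * v 0 - u 0 * v 2, u 0 * v 1 - u 1 * v 0]

/-- The angular velocity `Ω(L, γ)` of Chaplygin's marble, inverting
`L = BΩ − κ⟨γ,Ω⟩γ` (with `p = (L, γ)`). -/
noncomputable def chapOmega (B : Matrix (Fin 3) (Fin 3) ℝ) (κ : ℝ)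
    (p : (Fin 3 → ℝ) × (Fin 3 → ℝ)) : Fin 3 → ℝ :=
  B⁻¹.mulVec p.1
    + ((κ * dot3 p.2 (B⁻¹.mulVec p.1)) / (1 - κ * dot3 p.2 (B⁻¹.mulVec p.2)))
        • B⁻¹.mulVec p.2

/-- The vector field of Chaplygin's marble equations on ℝ⁶:
`Y(L, γ) = (L × Ω(L,γ), γ × Ω(L,γ))`. -/
noncomputable def chapY (B : Matrix (Fin 3) (Fin 3) ℝ) (κ : ℝ)
    (p : (Fin 3 → ℝ) × (Fin 3 → ℝ)) : (Fin 3 → ℝ) × (Fin 3 → ℝ) :=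
  (cross3 p.1 (chapOmega B κ p), cross3 p.2 (chapOmega B κ p))

/-- Chaplygin's measure density `f(L, γ) = (1 − κ⟨γ, B⁻¹γ⟩)^{−1/2}`. -/
noncomputable def chapDensity (B : Matrix (Fin 3) (Fin 3) ℝ) (κ : ℝ)
    (p : (Fin 3 → ℝ) × (Fin 3 → ℝ)) : ℝ :=
  (1 - κ * dot3 p.2 (B⁻¹.mulVec p.2)) ^ (-(1 : ℝ) / 2)

/-!
Write `C = B⁻¹`, `D = 1 - κ⟨γ, Cγ⟩` and `f = D^{-1/2}`. The divergence on `ℝ³ × ℝ³` is the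
`L`-divergence of the `L`-component plus the `γ`-divergence of the `γ`-component.
A field `v ↦ v × (Mv + a)` with `M` symmetric is divergence free. For fixed `γ`, `Ω = M L` with
`M = C + (κ/D) Cγ (Cγ)ᵀ` symmetric and `f` does not depend on `L`, so the `L`-part vanishes.
For fixed `L`, `f (γ × Ω) = f (γ × CL) + g (γ × Cγ)` with `g = κ⟨γ, CL⟩ D^{-3/2}`, so the `γ`-part
is `∇f · (γ × CL) + ∇g · (γ × Cγ)`. Since `∇D` is parallel to `Cγ ⟂ γ × Cγ`, this is
`κ D^{-3/2} (⟨Cγ, γ × CL⟩ + ⟨γ × Cγ, CL⟩)`, and the two triple products cancel.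
-/

namespace LinearMap

variable {R M N : Type*} [CommRing R] [AddCommGroup M] [Module R M] [Module.Free R M]
  [Module.Finite R M] [AddCommGroup N] [Module R N] [Module.Free R N] [Module.Finite R N]

theorem trace_prod_eq_add (T : M × N →ₗ[R] M × N) :
    trace R (M × N) T = trace R M (fst R M N ∘ₗ T ∘ₗ inl R M N)
      + trace R N (snd R M N ∘ₗ T ∘ₗ inr R M N) := by
  have hT : T = inl R M N ∘ₗ (fst R M N ∘ₗ T) + inr R M N ∘ₗ (snd R M N ∘ₗ T) := by
    ext x <;> simp
  conv_lhs => rw [hT, map_add, trace_comp_comm' (fst R M N ∘ₗ T),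
    trace_comp_comm' (snd R M N ∘ₗ T)]
  rfl

theorem trace_pi_eq_sum {n : Type*} [Fintype n] [DecidableEq n] (T : (n → R) →ₗ[R] (n → R)) :
    trace R (n → R) T = ∑ k, T (Pi.single k 1) k := by
  rw [← Matrix.toLin'_toMatrix' T, Matrix.trace_toLin'_eq]
  simp [Matrix.trace, LinearMap.toMatrix'_apply]

end LinearMap

section Divergence

variable {E E' : Type*} [NormedAddCommGroup E] [NormedSpace ℝ E]
  [NormedAddCommGroup E'] [NormedSpace ℝ E']

noncomputable def divergence (V : E → E) (x : E) : ℝ :=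
  LinearMap.trace ℝ E (fderiv ℝ V x)

theorem divergence_prod [FiniteDimensional ℝ E] [FiniteDimensional ℝ E'] {F : E × E' → E × E'}
    {p : E × E'} (hF : DifferentiableAt ℝ F p) :
    divergence F p = divergence (fun x => (F (x, p.2)).1) p.1
      + divergence (fun y => (F (p.1, y)).2) p.2 := by
  have hF' : HasFDerivAt F (fderiv ℝ F (p.1, p.2)) (p.1, p.2) := hF.hasFDerivAt
  have hx : HasFDerivAt (fun x : E => (x, p.2)) (ContinuousLinearMap.inl ℝ E E') p.1 :=
    (hasFDerivAt_id p.1).prodMk (hasFDerivAt_const p.2 p.1)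
  have hy : HasFDerivAt (fun y : E' => (p.1, y)) (ContinuousLinearMap.inr ℝ E E') p.2 :=
    (hasFDerivAt_const p.1 p.2).prodMk (hasFDerivAt_id p.2)
  have h₁ : fderiv ℝ (fun x => (F (x, p.2)).1) p.1 = _ :=
    (hasFDerivAt_fst.comp p.1 (hF'.comp p.1 hx)).fderiv
  have h₂ : fderiv ℝ (fun y => (F (p.1, y)).2) p.2 = _ :=
    (hasFDerivAt_snd.comp p.2 (hF'.comp p.2 hy)).fderiv
  rw [divergence, divergence, divergence, h₁, h₂, LinearMap.trace_prod_eq_add]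
  rfl

theorem divergence_add {V W : E → E} {x : E} (hV : DifferentiableAt ℝ V x)
    (hW : DifferentiableAt ℝ W x) :
    divergence (fun y => V y + W y) x = divergence V x + divergence W x := by
  rw [divergence, fderiv_fun_add hV hW]
  simp [divergence]

theorem divergence_smul [FiniteDimensional ℝ E] {φ : E → ℝ} {V : E → E} {x : E}
    (hφ : DifferentiableAt ℝ φ x) (hV : DifferentiableAt ℝ V x) :
    divergence (fun y => φ y • V y) x = φ x * divergence V x + fderiv ℝ φ x (V x) := by
  rw [divergence, fderiv_fun_smul hφ hV]
  simp [divergence]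

end Divergence

section DotCrossMulVec

variable {E : Type*} [NormedAddCommGroup E] [NormedSpace ℝ E] {x : E}

@[fun_prop]
theorem DifferentiableAt.dotProduct {n : Type*} [Fintype n] {f g : E → n → ℝ}
    (hf : DifferentiableAt ℝ f x) (hg : DifferentiableAt ℝ g x) :
    DifferentiableAt ℝ (fun y => f y ⬝ᵥ g y) x :=
  ((dotProductBilin ℝ ℝ : (n → ℝ) →ₗ[ℝ] _ →ₗ[ℝ] ℝ).toContinuousBilinearMap.hasFDerivAt_of_bilinear
    hf.hasFDerivAt hg.hasFDerivAt).differentiableAt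

@[fun_prop]
theorem DifferentiableAt.crossProduct {f g : E → Fin 3 → ℝ}
    (hf : DifferentiableAt ℝ f x) (hg : DifferentiableAt ℝ g x) :
    DifferentiableAt ℝ (fun y => f y ⨯₃ g y) x :=
  ((_root_.crossProduct : (Fin 3 → ℝ) →ₗ[ℝ] _ →ₗ[ℝ] _).toContinuousBilinearMap
    |>.hasFDerivAt_of_bilinear hf.hasFDerivAt hg.hasFDerivAt).differentiableAt

@[fun_prop]
theorem DifferentiableAt.mulVec {m n : Type*} [Fintype m] [Fintype n] [DecidableEq n]
    (A : Matrix m n ℝ) {f : E → n → ℝ} (hf : DifferentiableAt ℝ f x) :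
    DifferentiableAt ℝ (fun y => A *ᵥ f y) x :=
  A.mulVecLin.toContinuousLinearMap.differentiableAt.comp x hf

theorem fderiv_dotProduct_apply {n : Type*} [Fintype n] {f g : E → n → ℝ}
    (hf : DifferentiableAt ℝ f x) (hg : DifferentiableAt ℝ g x) (h : E) :
    fderiv ℝ (fun y => f y ⬝ᵥ g y) x h = fderiv ℝ f x h ⬝ᵥ g x + f x ⬝ᵥ fderiv ℝ g x h := by
  have hD : fderiv ℝ (fun y => f y ⬝ᵥ g y) x = _ :=
    ((dotProductBilin ℝ ℝ : (n → ℝ) →ₗ[ℝ] _ →ₗ[ℝ] ℝ).toContinuousBilinearMap.hasFDerivAt_of_bilinear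
      hf.hasFDerivAt hg.hasFDerivAt).fderiv
  rw [hD]
  simp [add_comm]

theorem fderiv_mulVec_apply {m n : Type*} [Fintype m] [Fintype n] [DecidableEq n]
    (A : Matrix m n ℝ) {f : E → n → ℝ} (hf : DifferentiableAt ℝ f x) (h : E) :
    fderiv ℝ (fun y => A *ᵥ f y) x h = A *ᵥ fderiv ℝ f x h := by
  have hD : fderiv ℝ (fun y => A *ᵥ f y) x = _ :=
    (A.mulVecLin.toContinuousLinearMap.hasFDerivAt.comp x hf.hasFDerivAt).fderiv
  rw [hD]
  simp

end DotCrossMulVec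

theorem fderiv_cross_mulVec_add_apply (M : Matrix (Fin 3) (Fin 3) ℝ) (a x h : Fin 3 → ℝ) :
    fderiv ℝ (fun v => v ⨯₃ (M *ᵥ v + a)) x h = x ⨯₃ (M *ᵥ h) + h ⨯₃ (M *ᵥ x + a) := by
  have hM : HasFDerivAt (fun v => M *ᵥ v + a) M.mulVecLin.toContinuousLinearMap x :=
    M.mulVecLin.toContinuousLinearMap.hasFDerivAt.add_const a
  have hD : fderiv ℝ (fun v => v ⨯₃ (M *ᵥ v + a)) x = _ :=
    ((crossProduct : (Fin 3 → ℝ) →ₗ[ℝ] _ →ₗ[ℝ] _).toContinuousBilinearMap.hasFDerivAt_of_bilinear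
      (hasFDerivAt_id x) hM).fderiv
  rw [hD]
  simp

theorem divergence_cross_mulVec_add {M : Matrix (Fin 3) (Fin 3) ℝ} (hM : Mᵀ = M)
    (a x : Fin 3 → ℝ) :
    divergence (fun v => v ⨯₃ (M *ᵥ v + a)) x = 0 := by
  have hM' : ∀ i j, M i j = M j i := fun i j => by rw [← transpose_apply M j i, hM]
  -- `h ↦ h × b` is traceless and the trace of `h ↦ x × Mh` only sees the antisymmetric part of `M`.
  rw [divergence, LinearMap.trace_pi_eq_sum]
  simp only [ContinuousLinearMap.coe_coe, fderiv_cross_mulVec_add_apply]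
  simp only [Fin.sum_univ_three, Pi.add_apply, cross_apply, mulVec_single, MulOpposite.op_one,
    one_smul, col_apply, Pi.single_apply, cons_val_zero, cons_val_one, cons_val, Fin.reduceEq,
    if_true, if_false]
  rw [hM' 0 1, hM' 0 2, hM' 1 2]
  ring

theorem dotProduct_cross_add_cross_dotProduct (u v w : Fin 3 → ℝ) :
    u ⬝ᵥ v ⨯₃ w + (v ⨯₃ u) ⬝ᵥ w = 0 := by
  rw [dotProduct_comm (v ⨯₃ u), triple_product_permutation u, triple_product_permutation w,
    ← dotProduct_add, cross_anticomm', dotProduct_zero]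

theorem dotProduct_mulVec_of_transpose_eq {n R : Type*} [Fintype n] [CommSemiring R]
    {A : Matrix n n R} (hA : Aᵀ = A) (u v : n → R) : u ⬝ᵥ A *ᵥ v = (A *ᵥ u) ⬝ᵥ v := by
  rw [dotProduct_mulVec, ← mulVec_transpose, hA]

noncomputable def chapDenom (C : Matrix (Fin 3) (Fin 3) ℝ) (κ : ℝ) (γ : Fin 3 → ℝ) : ℝ :=
  1 - κ * (γ ⬝ᵥ C *ᵥ γ)

noncomputable def angularVelocity (C : Matrix (Fin 3) (Fin 3) ℝ) (κ : ℝ) (L γ : Fin 3 → ℝ) :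
    Fin 3 → ℝ :=
  C *ᵥ L + (κ * (γ ⬝ᵥ C *ᵥ L) / chapDenom C κ γ) • C *ᵥ γ

section Chaplygin

variable {C : Matrix (Fin 3) (Fin 3) ℝ} (κ : ℝ)

theorem fderiv_chapDenom_apply (hC : Cᵀ = C) (γ w : Fin 3 → ℝ) :
    fderiv ℝ (chapDenom C κ) γ w = -(2 * κ) * ((C *ᵥ γ) ⬝ᵥ w) := by
  unfold chapDenom
  rw [fderiv_const_sub, fderiv_const_mul (by fun_prop)]
  simp only [_root_.neg_apply, _root_.smul_apply, smul_eq_mul]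
  rw [fderiv_dotProduct_apply (f := fun v => v) (g := fun v => C *ᵥ v) (by fun_prop) (by fun_prop),
    fderiv_mulVec_apply C (by fun_prop), fderiv_fun_id, ContinuousLinearMap.id_apply,
    dotProduct_mulVec_of_transpose_eq hC γ w, dotProduct_comm w]
  ring

/-- With `C = B⁻¹` this matrix is `(B - κ γ γᵀ)⁻¹` (Sherman–Morrison), the inverse of
`Ω ↦ BΩ - κ⟨γ, Ω⟩γ`. -/
theorem angularVelocity_eq_mulVec (hC : Cᵀ = C) (L γ : Fin 3 → ℝ) :
    angularVelocity C κ L γ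
      = (C + (κ / chapDenom C κ γ) • vecMulVec (C *ᵥ γ) (C *ᵥ γ)) *ᵥ L := by
  rw [angularVelocity, add_mulVec, smul_mulVec, vecMulVec_mulVec, op_smul_eq_smul, smul_smul,
    dotProduct_mulVec_of_transpose_eq hC, mul_div_right_comm]

theorem divergence_smul_cross_angularVelocity_left (hC : Cᵀ = C) (c : ℝ) (L γ : Fin 3 → ℝ) :
    divergence (fun L' => c • (L' ⨯₃ angularVelocity C κ L' γ)) L = 0 := by
  set M := C + (κ / chapDenom C κ γ) • vecMulVec (C *ᵥ γ) (C *ᵥ γ)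
  have hM : Mᵀ = M := by simp [M, transpose_vecMulVec, hC]
  have hdiv : divergence (fun v => v ⨯₃ (M *ᵥ v)) L = 0 := by
    simpa using divergence_cross_mulVec_add hM 0 L
  simp only [angularVelocity_eq_mulVec κ hC]
  rw [divergence_smul (differentiableAt_const c) (by fun_prop), hdiv]
  simp

theorem rpow_smul_cross_angularVelocity (L γ : Fin 3 → ℝ) :
    chapDenom C κ γ ^ (-(1:ℝ)/2) • (γ ⨯₃ angularVelocity C κ L γ)
      = chapDenom C κ γ ^ (-(1:ℝ)/2) • (γ ⨯₃ (C *ᵥ L))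
        + (κ * (γ ⬝ᵥ C *ᵥ L) * (chapDenom C κ γ ^ (-(1:ℝ)/2) * (chapDenom C κ γ)⁻¹)) •
          (γ ⨯₃ (C *ᵥ γ)) := by
  simp only [angularVelocity, map_add, map_smul, smul_add, smul_smul]
  congr 2
  ring

theorem divergence_rpow_smul_cross_angularVelocity_right (hC : Cᵀ = C) (L γ : Fin 3 → ℝ)
    (hD : chapDenom C κ γ ≠ 0) :
    divergence (fun γ' => chapDenom C κ γ' ^ (-(1:ℝ)/2) • (γ' ⨯₃ angularVelocity C κ L γ')) γ
      = 0 := by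
  set Φ : ℝ → ℝ := fun d => d ^ (-(1:ℝ)/2) * d⁻¹
  have hDd : DifferentiableAt ℝ (chapDenom C κ) γ := by unfold chapDenom; fun_prop
  have hf := hDd.hasFDerivAt.rpow_const (p := -(1:ℝ)/2) (Or.inl hD)
  have hΦ : DifferentiableAt ℝ Φ (chapDenom C κ γ) := by
    fun_prop (disch := first | exact hD | exact Or.inl hD)
  have hg : HasFDerivAt (fun γ' => κ * (γ' ⬝ᵥ C *ᵥ L) * Φ (chapDenom C κ γ')) _ γ :=
    ((differentiableAt_id.dotProduct (differentiableAt_const (C *ᵥ L))).hasFDerivAt.const_mul κ).mul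
      (hΦ.hasFDerivAt.comp γ hDd.hasFDerivAt)
  have hdiv₁ : divergence (fun v => v ⨯₃ (C *ᵥ L)) γ = 0 := by
    simpa using divergence_cross_mulVec_add transpose_zero (C *ᵥ L) γ
  have hdiv₂ : divergence (fun v => v ⨯₃ (C *ᵥ v)) γ = 0 := by
    simpa using divergence_cross_mulVec_add hC 0 γ
  -- `D` is constant along `γ × Cγ`, so only the derivative of `⟨γ, CL⟩` contributes to `∇g`.
  have hDconst : fderiv ℝ (chapDenom C κ) γ (γ ⨯₃ (C *ᵥ γ)) = 0 := by
    rw [fderiv_chapDenom_apply κ hC, dot_cross_self, mul_zero]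
  simp only [rpow_smul_cross_angularVelocity]
  rw [divergence_add (by fun_prop) (by fun_prop),
    divergence_smul hf.differentiableAt (by fun_prop), hdiv₁,
    divergence_smul hg.differentiableAt (by fun_prop), hdiv₂, hf.fderiv, hg.fderiv]
  simp only [_root_.add_apply, _root_.smul_apply, ContinuousLinearMap.comp_apply, smul_eq_mul,
    hDconst, fderiv_chapDenom_apply κ hC, fderiv_dotProduct_apply (x := γ) (f := fun v => v)
      differentiableAt_fun_id (differentiableAt_const (C *ᵥ L)), fderiv_fun_id, fderiv_fun_const,
    ContinuousLinearMap.id_apply, Pi.zero_apply, _root_.zero_apply, dotProduct_zero, add_zero,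
    map_zero, mul_zero, Φ, Real.rpow_sub_one hD]
  linear_combination (κ * chapDenom C κ γ ^ (-(1:ℝ)/2) / chapDenom C κ γ) *
    dotProduct_cross_add_cross_dotProduct (C *ᵥ γ) γ (C *ᵥ L)

end Chaplygin

theorem dot3_eq_dotProduct (u v : Fin 3 → ℝ) : dot3 u v = u ⬝ᵥ v := by
  simp [dot3, dotProduct, Fin.sum_univ_three]

theorem cross3_eq_crossProduct (u v : Fin 3 → ℝ) : cross3 u v = u ⨯₃ v := rfl

theorem chapDensity_smul_chapY (B : Matrix (Fin 3) (Fin 3) ℝ) (κ : ℝ)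
    (p : (Fin 3 → ℝ) × (Fin 3 → ℝ)) :
    chapDensity B κ p • chapY B κ p
      = (chapDenom B⁻¹ κ p.2 ^ (-(1:ℝ)/2) • (p.1 ⨯₃ angularVelocity B⁻¹ κ p.1 p.2),
          chapDenom B⁻¹ κ p.2 ^ (-(1:ℝ)/2) • (p.2 ⨯₃ angularVelocity B⁻¹ κ p.1 p.2)) := by
  simp only [chapDensity, chapY, chapOmega, angularVelocity, chapDenom, dot3_eq_dotProduct,
    cross3_eq_crossProduct, Prod.smul_mk]

theorem chaplygin_invariant_measure_general
    (B : Matrix (Fin 3) (Fin 3) ℝ) (hsym : Bᵀ = B) (κ : ℝ) :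
    ∀ p : (Fin 3 → ℝ) × (Fin 3 → ℝ),
      0 < 1 - κ * dot3 p.2 (B⁻¹.mulVec p.2) →
      LinearMap.trace ℝ ((Fin 3 → ℝ) × (Fin 3 → ℝ))
        (fderiv ℝ (fun q => chapDensity B κ q • chapY B κ q) p).toLinearMap = 0 := by
  rintro ⟨L, γ⟩ hpos
  have hC : (B⁻¹)ᵀ = B⁻¹ := by rw [transpose_nonsing_inv, hsym]
  have hD : chapDenom B⁻¹ κ γ ≠ 0 := by
    rw [chapDenom, ← dot3_eq_dotProduct]
    exact hpos.ne'
  have hF : DifferentiableAt ℝ (fun q => chapDensity B κ q • chapY B κ q) (L, γ) := by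
    simp only [chapDensity_smul_chapY, angularVelocity, chapDenom]
    fun_prop (disch := first | exact hD | exact Or.inl hD)
  change divergence _ _ = 0
  rw [divergence_prod hF]
  simp only [chapDensity_smul_chapY]
  rw [divergence_smul_cross_angularVelocity_left κ hC,
    divergence_rpow_smul_cross_angularVelocity_right κ hC L γ hD, add_zero]

/-- **Chaplygin's invariant measure on ℝ⁶.**  For symmetric invertible `B` and `κ ∈ ℝ`,
on the open set where `1 − κ⟨γ, B⁻¹γ⟩ > 0`, the divergence (trace of the Fréchet
derivative) of the vector field `f·Y` vanishes identically; i.e.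
`f(γ) dL dγ` is an invariant measure of Chaplygin's marble equations. -/
theorem chaplygin_invariant_measure
    (B : Matrix (Fin 3) (Fin 3) ℝ) (hsym : Bᵀ = B) (hinv : IsUnit B.det) (κ : ℝ) :
    ∀ p : (Fin 3 → ℝ) × (Fin 3 → ℝ),
      0 < 1 - κ * dot3 p.2 (B⁻¹.mulVec p.2) →
      LinearMap.trace ℝ ((Fin 3 → ℝ) × (Fin 3 → ℝ))
        (fderiv ℝ (fun q => chapDensity B κ q • chapY B κ q) p).toLinearMap = 0 :=
  chaplygin_invariant_measure_general B hsym κ
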